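/- arXiv:2306.12791 — 10 statements merged into one kernel-verified Lean document; each statement's English description precedes it below -/
import Mathlib

section
/- Let M be an NMDS matrix of order n over a finite field F_{2^r}. Then every row and every column of M contains at most one zero entry; consequently M has at least n^2 - n nonzero entries. -/
open Matrix

/-- The Hamming weight of a vector: the number of nonzero coordinates. -/
def wt {F : Type*} [Zero F] [DecidableEq F] {n : ℕ} (x : Fin n → F) : ℕ :=
  (Finset.univ.filter fun i => x i ≠ 0).card

/-- The differential branch number of a square matrix `M`:
the minimum of `wt x + wt (M x)` over all nonzero vectors `x`. -/
noncomputable def branchD {F : Type*} [Field F] [DecidableEq F] {n : ℕ}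
    (M : Matrix (Fin n) (Fin n) F) : ℕ :=
  sInf {k | ∃ x : Fin n → F, x ≠ 0 ∧ k = wt x + wt (M.mulVec x)}

/-- The linear branch number of a square matrix `M`:
the minimum of `wt x + wt (Mᵀ x)` over all nonzero vectors `x`. -/
noncomputable def branchL {F : Type*} [Field F] [DecidableEq F] {n : ℕ}
    (M : Matrix (Fin n) (Fin n) F) : ℕ :=
  sInf {k | ∃ x : Fin n → F, x ≠ 0 ∧ k = wt x + wt (Mᵀ.mulVec x)}

/-- A square matrix of order `n` is near-MDS (NMDS) if both its differential
and linear branch numbers equal `n`. -/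
def IsNMDS {F : Type*} [Field F] [DecidableEq F] {n : ℕ}
    (M : Matrix (Fin n) (Fin n) F) : Prop :=
  branchD M = n ∧ branchL M = n
/-- The number of nonzero entries of a matrix. -/
def nonzeroEntries {F : Type*} [Zero F] [DecidableEq F] {n : ℕ}
    (M : Matrix (Fin n) (Fin n) F) : ℕ :=
  (Finset.univ.filter fun p : Fin n × Fin n => M p.1 p.2 ≠ 0).card

open Finset

section Weight

variable {F : Type*} [Zero F] [DecidableEq F] {n : ℕ}

lemma wt_pi_single (j : Fin n) {a : F} (ha : a ≠ 0) : wt (Pi.single j a) = 1 := by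
  rw [wt, card_eq_one]
  exact ⟨j, by ext i; by_cases h : i = j <;> simp [h, ha]⟩

lemma card_zeros_add_wt (x : Fin n → F) : #{i | x i = 0} + wt x = n := by
  rw [wt, card_filter_add_card_filter_not, card_univ, Fintype.card_fin]

lemma nonzeroEntries_eq_sum_wt (M : Matrix (Fin n) (Fin n) F) :
    nonzeroEntries M = ∑ i, wt (M i) := by
  simp only [nonzeroEntries, wt, card_filter, Fintype.sum_prod_type]

lemma sq_sub_le_nonzeroEntries (M : Matrix (Fin n) (Fin n) F)
    (hrow : ∀ i, #{j | M i j = 0} ≤ 1) : n ^ 2 - n ≤ nonzeroEntries M := by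
  have hwt : ∀ i, n - 1 ≤ wt (M i) := fun i => by
    have := card_zeros_add_wt (M i)
    have := hrow i
    omega
  calc n ^ 2 - n = ∑ _i : Fin n, (n - 1) := by
        simp only [sum_const, card_univ, Fintype.card_fin, smul_eq_mul, Nat.mul_sub, sq, mul_one]
    _ ≤ ∑ i, wt (M i) := sum_le_sum fun i _ => hwt i
    _ = nonzeroEntries M := (nonzeroEntries_eq_sum_wt M).symm

end Weight

section BranchNumber

variable {F : Type*} [Field F] [DecidableEq F] {n : ℕ}

lemma branchD_le (M : Matrix (Fin n) (Fin n) F) {x : Fin n → F} (hx : x ≠ 0) :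
    branchD M ≤ wt x + wt (M *ᵥ x) :=
  Nat.sInf_le ⟨x, hx, rfl⟩

/-- Testing the branch number on a unit vector: `M *ᵥ eⱼ` is the `j`-th column of `M`. -/
lemma card_zeros_col_add_branchD_le (M : Matrix (Fin n) (Fin n) F) (j : Fin n) :
    #{i | M i j = 0} + branchD M ≤ n + 1 := by
  have hbound := branchD_le M (Pi.single_ne_zero_iff.mpr one_ne_zero : Pi.single j (1 : F) ≠ 0)
  rw [wt_pi_single j one_ne_zero, mulVec_single_one] at hbound
  have := card_zeros_add_wt fun i => M i j
  change branchD M ≤ 1 + wt (fun i => M i j) at hbound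
  omega

lemma IsNMDS.card_zeros_col_le_one {M : Matrix (Fin n) (Fin n) F} (hM : IsNMDS M) (j : Fin n) :
    #{i | M i j = 0} ≤ 1 := by
  have := card_zeros_col_add_branchD_le M j
  have := hM.1
  omega

lemma IsNMDS.transpose {M : Matrix (Fin n) (Fin n) F} (hM : IsNMDS M) : IsNMDS Mᵀ :=
  ⟨hM.2, hM.1⟩

lemma IsNMDS.card_zeros_row_le_one {M : Matrix (Fin n) (Fin n) F} (hM : IsNMDS M) (i : Fin n) :
    #{j | M i j = 0} ≤ 1 :=
  hM.transpose.card_zeros_col_le_one i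

end BranchNumber

theorem stmt_0_general {F : Type*} [Field F] [DecidableEq F]
    {n : ℕ} (M : Matrix (Fin n) (Fin n) F) (hM : IsNMDS M) :
    (∀ i, (Finset.univ.filter fun j => M i j = 0).card ≤ 1) ∧
    (∀ j, (Finset.univ.filter fun i => M i j = 0).card ≤ 1) ∧
    n ^ 2 - n ≤ nonzeroEntries M :=
  ⟨hM.card_zeros_row_le_one, hM.card_zeros_col_le_one,
    sq_sub_le_nonzeroEntries M hM.card_zeros_row_le_one⟩

/-- An NMDS matrix of order n over a finite field of characteristic 2 has at most one
zero entry in every row and every column, hence at least n² − n nonzero entries. -/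
theorem stmt_0 {F : Type*} [Field F] [Fintype F] [DecidableEq F] [CharP F 2]
    {n : ℕ} (M : Matrix (Fin n) (Fin n) F) (hM : IsNMDS M) :
    (∀ i, (Finset.univ.filter fun j => M i j = 0).card ≤ 1) ∧
    (∀ j, (Finset.univ.filter fun i => M i j = 0).card ≤ 1) ∧
    n ^ 2 - n ≤ nonzeroEntries M :=
  stmt_0_general M hM
end

section
/- If M is a nonsingular NMDS matrix of order n over a finite field F_{2^r}, then its inverse M^{-1} is also an NMDS matrix. -/
open Matrix

lemma inv_set_eq {F : Type*} [Field F] [DecidableEq F] {n : ℕ}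
    (N : Matrix (Fin n) (Fin n) F) (hdet : IsUnit N.det) :
    {k | ∃ x : Fin n → F, x ≠ 0 ∧ k = wt x + wt (N⁻¹.mulVec x)} =
    {k | ∃ x : Fin n → F, x ≠ 0 ∧ k = wt x + wt (N.mulVec x)} := by
  have hNI : ∀ v : Fin n → F, N⁻¹.mulVec (N.mulVec v) = v := by
    intro v
    rw [Matrix.mulVec_mulVec, Matrix.nonsing_inv_mul N hdet, Matrix.one_mulVec]
  have hIN : ∀ v : Fin n → F, N.mulVec (N⁻¹.mulVec v) = v := by
    intro v
    rw [Matrix.mulVec_mulVec, Matrix.mul_nonsing_inv N hdet, Matrix.one_mulVec]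
  ext k
  constructor
  · rintro ⟨x, hx, rfl⟩
    refine ⟨N⁻¹.mulVec x, ?_, ?_⟩
    · intro h
      apply hx
      have := congrArg N.mulVec h
      rwa [hIN, Matrix.mulVec_zero] at this
    · rw [hIN]; ring
  · rintro ⟨x, hx, rfl⟩
    refine ⟨N.mulVec x, ?_, ?_⟩
    · intro h
      apply hx
      have := congrArg N⁻¹.mulVec h
      rwa [hNI, Matrix.mulVec_zero] at this
    · rw [hNI]; ring

/-- The inverse of a nonsingular NMDS matrix is again NMDS. -/
theorem stmt_1 {F : Type*} [Field F] [Fintype F] [DecidableEq F] [CharP F 2]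
    {n : ℕ} (M : Matrix (Fin n) (Fin n) F) (hdet : IsUnit M.det) (hM : IsNMDS M) :
    IsNMDS M⁻¹ := by
  obtain ⟨hD, hL⟩ := hM
  constructor
  · rw [branchD, inv_set_eq M hdet, ← branchD, hD]
  · rw [branchL, Matrix.transpose_nonsing_inv,
      inv_set_eq Mᵀ (by simpa using hdet), ← branchL, hL]
end

section
/- Let M = P·D1 + D2 be a DLS matrix of order n ≥ 2 over F_{2^r}. Then for every integer k with 0 ≤ k < n − 2, the matrix M^k is not NMDS. -/
open Matrix

/-- The permutation matrix associated to a permutation `σ`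
(a 0-1 matrix obtained by permuting the rows of the identity matrix). -/
def permMatrix (F : Type*) [Zero F] [One F] {n : ℕ} (σ : Equiv.Perm (Fin n)) :
    Matrix (Fin n) (Fin n) F :=
  Matrix.of fun i j => if i = σ j then 1 else 0
/-- The diagonal-like sparse (DLS) matrix `DLS(σ; D1, D2) = P·D1 + D2`, where `P` is
the permutation matrix of `σ`. -/
def DLS {F : Type*} [Field F] {n : ℕ} (σ : Equiv.Perm (Fin n)) (D1 D2 : Fin n → F) :
    Matrix (Fin n) (Fin n) F :=
  permMatrix F σ * Matrix.diagonal D1 + Matrix.diagonal D2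

lemma dls_mulVec {F : Type*} [Field F] {n : ℕ} (σ : Equiv.Perm (Fin n))
    (D1 D2 : Fin n → F) (y : Fin n → F) (i : Fin n) :
    (DLS σ D1 D2).mulVec y i = D1 (σ⁻¹ i) * y (σ⁻¹ i) + D2 i * y i := by
  simp only [DLS, Matrix.add_mulVec, Pi.add_apply, Matrix.mulVec_diagonal]
  congr 1
  rw [Matrix.mulVec, dotProduct]
  have : ∀ j, (permMatrix F σ * Matrix.diagonal D1) i j * y j
      = if σ⁻¹ i = j then D1 j * y j else 0 := by
    intro j
    rw [Matrix.mul_diagonal]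
    have heq : (i = σ j) = (σ⁻¹ i = j) := by
      apply propext; constructor
      · intro h; simp [h]
      · intro h; simp [← h]
    by_cases h : σ⁻¹ i = j <;> simp [permMatrix, heq, h, mul_assoc]
  simp only [this, Finset.sum_ite_eq, Finset.mem_univ, if_true]

lemma dls_pow_support {F : Type*} [Field F] {n : ℕ} (σ : Equiv.Perm (Fin n))
    (D1 D2 : Fin n → F) (hn : 0 < n) (k : ℕ) (i : Fin n)
    (hi : i ∉ (Finset.range (k+1)).image (fun m => (σ ^ m) (⟨0, hn⟩ : Fin n))) :
    ((DLS σ D1 D2) ^ k).mulVec (Pi.single (⟨0, hn⟩ : Fin n) 1) i = 0 := by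
  induction k generalizing i with
  | zero =>
    simp only [pow_zero, Matrix.one_mulVec]
    have : i ≠ ⟨0, hn⟩ := by
      intro h; apply hi; simp [h]
    simp [Pi.single_apply, this]
  | succ k ih =>
    rw [pow_succ', ← Matrix.mulVec_mulVec, dls_mulVec]
    have h1 : i ∉ (Finset.range (k+1)).image (fun m => (σ ^ m) (⟨0, hn⟩ : Fin n)) := by
      intro h; apply hi
      simp only [Finset.mem_image, Finset.mem_range] at h ⊢
      obtain ⟨m, hm, he⟩ := h
      exact ⟨m, by omega, he⟩
    have h2 : σ⁻¹ i ∉ (Finset.range (k+1)).image (fun m => (σ ^ m) (⟨0, hn⟩ : Fin n)) := by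
      intro h; apply hi
      simp only [Finset.mem_image, Finset.mem_range] at h ⊢
      obtain ⟨m, hm, he⟩ := h
      refine ⟨m+1, by omega, ?_⟩
      rw [pow_succ', Equiv.Perm.mul_apply, he]
      simp
    rw [ih _ h1, ih _ h2]
    ring

/-- For a DLS matrix M of order n ≥ 2, M^k is not NMDS for k < n − 2. -/
theorem stmt_6 {F : Type*} [Field F] [Fintype F] [DecidableEq F] [CharP F 2]
    {n : ℕ} (hn : 2 ≤ n) (σ : Equiv.Perm (Fin n)) (hσ : ∀ i, σ i ≠ i)
    (D1 D2 : Fin n → F) (hD1 : ∀ i, D1 i ≠ 0)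
    (k : ℕ) (hk : k < n - 2) :
    ¬ IsNMDS (DLS σ D1 D2 ^ k) := by
  have hn0 : 0 < n := by omega
  intro ⟨hd, _⟩
  set e : Fin n → F := Pi.single (⟨0, hn0⟩ : Fin n) 1 with he
  have hne : e ≠ 0 := by
    intro h
    have := congrFun h ⟨0, hn0⟩
    simp [he, Pi.single_apply] at this
  have hmem : wt e + wt ((DLS σ D1 D2 ^ k).mulVec e) ∈
      {m | ∃ x : Fin n → F, x ≠ 0 ∧ m = wt x + wt ((DLS σ D1 D2 ^ k).mulVec x)} :=
    ⟨e, hne, rfl⟩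
  have hle := Nat.sInf_le hmem
  rw [← branchD, hd] at hle
  have hwe : wt e = 1 := by
    rw [wt]
    rw [Finset.card_eq_one]
    refine ⟨⟨0, hn0⟩, ?_⟩
    ext i
    simp only [Finset.mem_filter, Finset.mem_univ, true_and, Finset.mem_singleton, he,
      Pi.single_apply]
    constructor
    · intro h; by_contra hi; simp [hi] at h
    · intro h; simp [h]
  have hsub : (Finset.univ.filter fun i => (DLS σ D1 D2 ^ k).mulVec e i ≠ 0) ⊆
      (Finset.range (k+1)).image (fun m => (σ ^ m) (⟨0, hn0⟩ : Fin n)) := by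
    intro i hi
    simp only [Finset.mem_filter] at hi
    by_contra h
    exact hi.2 (dls_pow_support σ D1 D2 hn0 k i h)
  have hwM : wt ((DLS σ D1 D2 ^ k).mulVec e) ≤ k + 1 := by
    calc wt ((DLS σ D1 D2 ^ k).mulVec e) ≤
        ((Finset.range (k+1)).image (fun m => (σ ^ m) (⟨0, hn0⟩ : Fin n))).card :=
          Finset.card_le_card hsub
      _ ≤ (Finset.range (k+1)).card := Finset.card_image_le
      _ = k + 1 := Finset.card_range _
  omega
end

section
/- Let M = P·D1 + D2 be a DLS matrix of order n ≥ 2 over F_{2^r} whose underlying permutation ρ is not an n-cycle. Then M^{n−1} contains at most n^2 − 2n nonzero entries and M^n contains at most n^2 − n − 2 nonzero entries. -/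
open Matrix

lemma DLS_entry_ne_zero {F : Type*} [Field F] [DecidableEq F] {n : ℕ}
    (σ : Equiv.Perm (Fin n)) (D1 D2 : Fin n → F) {i j : Fin n}
    (h : DLS σ D1 D2 i j ≠ 0) : i = σ j ∨ i = j := by
  by_contra hc
  push_neg at hc
  apply h
  simp [DLS, permMatrix, Matrix.add_apply, Matrix.mul_diagonal, Matrix.diagonal_apply,
    hc.1, hc.2, Ne.symm hc.2]

lemma DLS_pow_sameCycle {F : Type*} [Field F] [DecidableEq F] {n : ℕ}
    (σ : Equiv.Perm (Fin n)) (D1 D2 : Fin n → F) (k : ℕ) {i j : Fin n}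
    (h : (DLS σ D1 D2 ^ k) i j ≠ 0) : σ.SameCycle j i := by
  induction k generalizing i with
  | zero =>
    simp only [pow_zero, Matrix.one_apply, ne_eq, ite_eq_right_iff, not_forall] at h
    exact h.1 ▸ Equiv.Perm.SameCycle.refl σ j
  | succ k ih =>
    rw [pow_succ', Matrix.mul_apply] at h
    obtain ⟨l, -, hl⟩ := Finset.exists_ne_zero_of_sum_ne_zero h
    have h1 : DLS σ D1 D2 i l ≠ 0 := fun hz => hl (by rw [hz, zero_mul])
    have h2 : (DLS σ D1 D2 ^ k) l j ≠ 0 := fun hz => hl (by rw [hz, mul_zero])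
    have hjl := ih h2
    rcases DLS_entry_ne_zero σ D1 D2 h1 with h | h
    · exact hjl.trans ⟨1, by simp [h]⟩
    · exact h ▸ hjl

lemma sameCycle_pairs_card {n : ℕ} (hn : 2 ≤ n) (σ : Equiv.Perm (Fin n)) (hσ : ∀ i, σ i ≠ i)
    (hcyc : ¬ (σ.IsCycle ∧ σ.support.card = n)) :
    4 ≤ n ∧
    (Finset.univ.filter fun p : Fin n × Fin n => σ.SameCycle p.2 p.1).card + 4 * n ≤ n ^ 2 + 8 := by
  have hnpos : 0 < n := by omega
  set a : Fin n := ⟨0, hnpos⟩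
  set O : Finset (Fin n) := Finset.univ.filter (σ.SameCycle a) with hO
  have hmemO : ∀ x, x ∈ O ↔ σ.SameCycle a x := by
    intro x; simp [hO]
  have hb : ∃ b, b ∉ O := by
    by_contra hall
    push_neg at hall
    apply hcyc
    constructor
    · exact ⟨a, hσ a, fun y _ => (hmemO y).1 (hall y)⟩
    · have : σ.support = Finset.univ := by
        ext x; simp [Equiv.Perm.mem_support, hσ x]
      rw [this]; simp
  obtain ⟨b, hbO⟩ := hb
  have hOa : a ∈ O := (hmemO a).2 (Equiv.Perm.SameCycle.refl σ a)
  have hOsa : σ a ∈ O := (hmemO (σ a)).2 ⟨1, by simp⟩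
  have hσbO : σ b ∉ O := fun h => hbO ((hmemO b).2 (((hmemO (σ b)).1 h).trans
    (Equiv.Perm.SameCycle.symm ⟨1, by simp⟩)))
  have hcO : 2 ≤ O.card := by
    have hsub : ({a, σ a} : Finset (Fin n)) ⊆ O := by
      intro x hx; rcases Finset.mem_insert.1 hx with rfl | hx
      · exact hOa
      · rw [Finset.mem_singleton.1 hx]; exact hOsa
    calc 2 = ({a, σ a} : Finset (Fin n)).card := by
            rw [Finset.card_insert_of_notMem (by simpa using (hσ a).symm), Finset.card_singleton]
      _ ≤ O.card := Finset.card_le_card hsub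
  have hcOc : 2 ≤ Oᶜ.card := by
    have hsub : ({b, σ b} : Finset (Fin n)) ⊆ Oᶜ := by
      intro x hx; rcases Finset.mem_insert.1 hx with rfl | hx
      · simpa using hbO
      · rw [Finset.mem_singleton.1 hx]; simpa using hσbO
    calc 2 = ({b, σ b} : Finset (Fin n)).card := by
            rw [Finset.card_insert_of_notMem (by simpa using (hσ b).symm), Finset.card_singleton]
      _ ≤ Oᶜ.card := Finset.card_le_card hsub
  have hsum : O.card + Oᶜ.card = n := by
    rw [Finset.card_add_card_compl]; simp
  have hsubset : (Finset.univ.filter fun p : Fin n × Fin n => σ.SameCycle p.2 p.1)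
      ⊆ O ×ˢ O ∪ Oᶜ ×ˢ Oᶜ := by
    intro p hp
    have hp' : σ.SameCycle p.2 p.1 := (Finset.mem_filter.1 hp).2
    by_cases h2 : p.2 ∈ O
    · exact Finset.mem_union_left _ (Finset.mem_product.2
        ⟨(hmemO p.1).2 (((hmemO p.2).1 h2).trans hp'), h2⟩)
    · refine Finset.mem_union_right _ (Finset.mem_product.2 ⟨?_, by simpa using h2⟩)
      simp only [Finset.mem_compl, hmemO] at h2 ⊢
      exact fun h1 => h2 (h1.trans hp'.symm)
  have hcard : (Finset.univ.filter fun p : Fin n × Fin n => σ.SameCycle p.2 p.1).card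
      ≤ O.card ^ 2 + Oᶜ.card ^ 2 := by
    calc _ ≤ (O ×ˢ O ∪ Oᶜ ×ˢ Oᶜ).card := Finset.card_le_card hsubset
      _ ≤ (O ×ˢ O).card + (Oᶜ ×ˢ Oᶜ).card := Finset.card_union_le _ _
      _ = O.card ^ 2 + Oᶜ.card ^ 2 := by rw [Finset.card_product, Finset.card_product]; ring
  set c := O.card
  set d := Oᶜ.card
  constructor
  · omega
  · nlinarith [hcard, hsum, hcO, hcOc, sq_nonneg (c - d)]

/-- If the permutation of a DLS matrix M of order n ≥ 2 is not an n-cycle, then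
M^(n−1) has at most n² − 2n nonzero entries and M^n has at most n² − n − 2. -/
theorem stmt_7 {F : Type*} [Field F] [Fintype F] [DecidableEq F] [CharP F 2]
    {n : ℕ} (hn : 2 ≤ n) (σ : Equiv.Perm (Fin n)) (hσ : ∀ i, σ i ≠ i)
    (hcyc : ¬ (σ.IsCycle ∧ σ.support.card = n))
    (D1 D2 : Fin n → F) (hD1 : ∀ i, D1 i ≠ 0) :
    nonzeroEntries (DLS σ D1 D2 ^ (n - 1)) ≤ n ^ 2 - 2 * n ∧
    nonzeroEntries (DLS σ D1 D2 ^ n) ≤ n ^ 2 - n - 2 := by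
  obtain ⟨h4, hS⟩ := sameCycle_pairs_card hn σ hσ hcyc
  have key : ∀ k : ℕ, nonzeroEntries (DLS σ D1 D2 ^ k) ≤
      (Finset.univ.filter fun p : Fin n × Fin n => σ.SameCycle p.2 p.1).card := by
    intro k
    apply Finset.card_le_card
    intro p hp
    rw [Finset.mem_filter] at hp ⊢
    exact ⟨hp.1, DLS_pow_sameCycle σ D1 D2 k hp.2⟩
  have h1 := (key (n - 1)).trans_lt (by omega : _ < n ^ 2 + 8 - 4 * n + 1)
  have hm : 4 * n ≤ n ^ 2 := by nlinarith
  constructor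
  · have := key (n - 1); omega
  · have := key n; omega
end

section
/- Let M = P·D1 + D2 be a DLS matrix of order n ≥ 2 over F_{2^r} whose underlying permutation ρ is not an n-cycle. Then for every integer k with 0 ≤ k ≤ n, the matrix M^k is not NMDS. -/
open Matrix

/-- If the permutation of a DLS matrix M of order n ≥ 2 is not an n-cycle, then
M^k is not NMDS for every k ≤ n. -/
theorem stmt_8 {F : Type*} [Field F] [Fintype F] [DecidableEq F] [CharP F 2]
    {n : ℕ} (hn : 2 ≤ n) (σ : Equiv.Perm (Fin n)) (hσ : ∀ i, σ i ≠ i)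
    (hcyc : ¬ (σ.IsCycle ∧ σ.support.card = n))
    (D1 D2 : Fin n → F) (hD1 : ∀ i, D1 i ≠ 0)
    (k : ℕ) (hk : k ≤ n) :
    ¬ IsNMDS (DLS σ D1 D2 ^ k) := by
  classical
  rintro ⟨hD, -⟩
  have hn0 : 0 < n := by omega
  set j : Fin n := ⟨0, hn0⟩ with hj
  set S : Finset (Fin n) := Finset.univ.filter (fun i => σ.SameCycle j i) with hSdef
  have hmemS : ∀ i, i ∈ S ↔ σ.SameCycle j i := by
    intro i; simp [hSdef]
  have hjS : j ∈ S := (hmemS j).2 (Equiv.Perm.SameCycle.refl σ j)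
  have hSinv : ∀ i, i ∈ S → σ i ∈ S := by
    intro i hi
    exact (hmemS _).2 ((Equiv.Perm.sameCycle_apply_right).2 ((hmemS i).1 hi))
  -- find c outside S
  obtain ⟨c, hc⟩ : ∃ c, c ∉ S := by
    by_contra h
    push_neg at h
    apply hcyc
    constructor
    · exact ⟨j, hσ j, fun y _ => (hmemS y).1 (h y)⟩
    · have : σ.support = Finset.univ := by
        apply Finset.eq_univ_iff_forall.2
        intro i; simpa [Equiv.Perm.mem_support] using hσ i
      simp [this]
  have hσc : σ c ∉ S := by
    intro h
    exact hc ((hmemS c).2 ((Equiv.Perm.sameCycle_apply_right).1 ((hmemS _).1 h)))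
  -- cardinality bound
  have hScard : S.card + 2 ≤ n := by
    have hsub : S ⊆ Finset.univ \ {c, σ c} := by
      intro i hi
      simp only [Finset.mem_sdiff, Finset.mem_univ, true_and, Finset.mem_insert,
        Finset.mem_singleton]
      rintro (rfl | rfl)
      · exact hc hi
      · exact hσc hi
    have hcard2 : ({c, σ c} : Finset (Fin n)).card = 2 := by
      rw [Finset.card_insert_of_notMem (by simp [(hσ c).symm]), Finset.card_singleton]
    have := Finset.card_le_card hsub
    rw [Finset.card_sdiff_of_subset (by simp)] at this
    simp [hcard2] at this
    omega
  -- matrix entries vanish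
  have hentry : ∀ i j' : Fin n, j' ∈ S → i ∉ S → DLS σ D1 D2 i j' = 0 := by
    intro i j' hj' hi
    have h1 : i ≠ σ j' := fun h => hi (h ▸ hSinv j' hj')
    have h2 : i ≠ j' := fun h => hi (h ▸ hj')
    simp [DLS, permMatrix, Matrix.add_apply, Matrix.mul_diagonal,
      Matrix.diagonal_apply_ne _ h2, h1]
  -- support preservation for M
  have hstep : ∀ x : Fin n → F, (∀ i, i ∉ S → x i = 0) →
      ∀ i, i ∉ S → (DLS σ D1 D2).mulVec x i = 0 := by
    intro x hx i hi
    rw [Matrix.mulVec, dotProduct]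
    apply Finset.sum_eq_zero
    intro j' _
    by_cases hj' : j' ∈ S
    · rw [hentry i j' hj' hi, zero_mul]
    · rw [hx j' hj', mul_zero]
  -- support preservation for M^m
  have key : ∀ m : ℕ, ∀ x : Fin n → F, (∀ i, i ∉ S → x i = 0) →
      ∀ i, i ∉ S → ((DLS σ D1 D2) ^ m).mulVec x i = 0 := by
    intro m
    induction m with
    | zero => intro x hx i hi; simpa using hx i hi
    | succ m ih =>
      intro x hx i hi
      rw [pow_succ, ← Matrix.mulVec_mulVec]
      exact ih _ (fun i' hi' => hstep x hx i' hi') i hi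
  -- the test vector
  set x : Fin n → F := fun i => if i = j then 1 else 0 with hxdef
  have hx0 : x ≠ 0 := by
    intro h
    have := congrFun h j
    simp [hxdef] at this
  have hxsupp : ∀ i, i ∉ S → x i = 0 := by
    intro i hi
    simp only [hxdef]
    rw [if_neg]
    rintro rfl; exact hi hjS
  have hwx : wt x ≤ 1 := by
    have : (Finset.univ.filter fun i => x i ≠ 0) ⊆ {j} := by
      intro i hi
      simp only [Finset.mem_filter, hxdef] at hi
      rcases hi with ⟨-, hi⟩
      by_contra h
      simp only [Finset.mem_singleton] at h
      exact hi (if_neg h)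
    simpa [wt] using Finset.card_le_card this
  have hwMx : wt (((DLS σ D1 D2) ^ k).mulVec x) ≤ S.card := by
    have : (Finset.univ.filter fun i => ((DLS σ D1 D2) ^ k).mulVec x i ≠ 0) ⊆ S := by
      intro i hi
      simp only [Finset.mem_filter] at hi
      by_contra h
      exact hi.2 (key k x hxsupp i h)
    simpa [wt] using Finset.card_le_card this
  have hmem : wt x + wt (((DLS σ D1 D2) ^ k).mulVec x) ∈
      {m | ∃ y : Fin n → F, y ≠ 0 ∧ m = wt y + wt (((DLS σ D1 D2) ^ k).mulVec y)} :=
    ⟨x, hx0, rfl⟩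
  have hle := Nat.sInf_le hmem
  rw [branchD] at hD
  omega
end

section
/- Let a_1,…,a_n and a_1',…,a_n' be nonzero elements of F_{2^r} with a_1·a_2·…·a_n = a_1'·a_2'·…·a_n', let D1 = diag(a_1,…,a_n), D1' = diag(a_1',…,a_n'), let D2 be any diagonal matrix over F_{2^r}, let ρ be a derangement of {1,…,n}, and let k ∈ {n−1, n}. Then the DLS matrix M = DLS(ρ; D1, D2) is k-NMDS if and only if M' = DLS(ρ; D1', D2) is k-NMDS. -/
open Matrix

section helpers
variable {F : Type*} [Field F] [DecidableEq F] {n : ℕ}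

lemma wt_mul_left (e x : Fin n → F) (he : ∀ i, e i ≠ 0) :
    wt (fun i => e i * x i) = wt x := by
  unfold wt
  congr 1
  ext i
  simp [he i]

lemma branch_set_subset (N N' : Matrix (Fin n) (Fin n) F) (e : Fin n → F)
    (he : ∀ i, e i ≠ 0) (hcomm : N * diagonal e = diagonal e * N') :
    {k | ∃ x : Fin n → F, x ≠ 0 ∧ k = wt x + wt (N'.mulVec x)} ⊆
    {k | ∃ x : Fin n → F, x ≠ 0 ∧ k = wt x + wt (N.mulVec x)} := by
  rintro k ⟨x, hx, rfl⟩
  refine ⟨fun i => e i * x i, ?_, ?_⟩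
  · intro h
    apply hx
    funext i
    have := congrFun h i
    simpa [he i] using this
  · have h1 : (fun i => e i * x i) = (diagonal e).mulVec x := by
      funext i; rw [mulVec_diagonal]
    have h2 : N.mulVec ((diagonal e).mulVec x) = (diagonal e).mulVec (N'.mulVec x) := by
      rw [mulVec_mulVec, hcomm, ← mulVec_mulVec]
    have h3 : (diagonal e).mulVec (N'.mulVec x) = fun i => e i * N'.mulVec x i := by
      funext i; rw [mulVec_diagonal]
    rw [h1, h2, h3, ← h1, wt_mul_left e x he, wt_mul_left _ _ he]

lemma comm_symm (N N' : Matrix (Fin n) (Fin n) F) (e : Fin n → F)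
    (he : ∀ i, e i ≠ 0) (hcomm : N * diagonal e = diagonal e * N') :
    N' * diagonal (fun i => (e i)⁻¹) = diagonal (fun i => (e i)⁻¹) * N := by
  ext i j
  have h : (N * diagonal e) i j = (diagonal e * N') i j := by rw [hcomm]
  rw [mul_diagonal, diagonal_mul] at h
  rw [mul_diagonal, diagonal_mul]
  rw [← div_eq_mul_inv, inv_mul_eq_div, div_eq_div_iff (he j) (he i)]
  linear_combination -h

end helpers

set_option linter.unusedSectionVars false

section helpers2
variable {F : Type*} [Field F] [DecidableEq F] {n : ℕ}

lemma branchD_eq_of_comm (N N' : Matrix (Fin n) (Fin n) F) (e : Fin n → F)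
    (he : ∀ i, e i ≠ 0) (hcomm : N * diagonal e = diagonal e * N') :
    branchD N = branchD N' := by
  unfold branchD
  congr 1
  apply Set.Subset.antisymm
  · exact branch_set_subset N' N (fun i => (e i)⁻¹) (fun i => inv_ne_zero (he i))
      (comm_symm N N' e he hcomm)
  · exact branch_set_subset N N' e he hcomm

lemma isNMDS_iff_of_comm (N N' : Matrix (Fin n) (Fin n) F) (e : Fin n → F)
    (he : ∀ i, e i ≠ 0) (hcomm : N * diagonal e = diagonal e * N') :
    IsNMDS N ↔ IsNMDS N' := by
  have hT : N'ᵀ * diagonal e = diagonal e * Nᵀ := by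
    have := congrArg Matrix.transpose hcomm
    rw [Matrix.transpose_mul, Matrix.transpose_mul, Matrix.diagonal_transpose] at this
    exact this.symm
  have hD := branchD_eq_of_comm N N' e he hcomm
  have hL : branchL N = branchL N' := by
    have := branchD_eq_of_comm N'ᵀ Nᵀ e he hT
    unfold branchD at this
    unfold branchL
    exact this.symm
  unfold IsNMDS
  rw [hD, hL]

lemma pow_comm_diag (M M' : Matrix (Fin n) (Fin n) F) (e : Fin n → F)
    (hcomm : M * diagonal e = diagonal e * M') (k : ℕ) :
    M ^ k * diagonal e = diagonal e * M' ^ k := by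
  induction k with
  | zero => simp
  | succ k ih =>
      rw [pow_succ, pow_succ, mul_assoc, hcomm, ← mul_assoc, ih, mul_assoc]

end helpers2

section helpers3
variable {F : Type*} [Field F] [DecidableEq F] {n : ℕ}

lemma DLS_apply (σ : Equiv.Perm (Fin n)) (D1 D2 : Fin n → F) (i j : Fin n) :
    DLS σ D1 D2 i j = (if i = σ j then D1 j else 0) + (if i = j then D2 j else 0) := by
  unfold DLS
  rw [Matrix.add_apply, Matrix.mul_diagonal]
  congr 1
  · unfold permMatrix
    simp only [Matrix.of_apply]
    split <;> simp
  · rw [Matrix.diagonal_apply]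
    split
    · next h => rw [h]
    · rfl

lemma DLS_support (σ : Equiv.Perm (Fin n)) (D1 D2 : Fin n → F) (i j : Fin n)
    (h : DLS σ D1 D2 i j ≠ 0) : σ.SameCycle j i := by
  rw [DLS_apply] at h
  by_cases h1 : i = σ j
  · exact ⟨1, by simp [h1.symm]⟩
  · by_cases h2 : i = j
    · exact h2 ▸ Equiv.Perm.SameCycle.refl σ j
    · simp [h1, h2] at h

lemma DLS_pow_support (σ : Equiv.Perm (Fin n)) (D1 D2 : Fin n → F) (k : ℕ) (i j : Fin n)
    (h : (DLS σ D1 D2 ^ k) i j ≠ 0) : σ.SameCycle j i := by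
  induction k generalizing i j with
  | zero =>
      rw [pow_zero, Matrix.one_apply] at h
      split at h
      · next heq => exact heq ▸ Equiv.Perm.SameCycle.refl σ j
      · exact absurd rfl h
  | succ k ih =>
      rw [pow_succ, Matrix.mul_apply] at h
      obtain ⟨l, -, hl⟩ := Finset.exists_ne_zero_of_sum_ne_zero h
      have h1 : (DLS σ D1 D2 ^ k) i l ≠ 0 := fun hc => hl (by rw [hc, zero_mul])
      have h2 : DLS σ D1 D2 l j ≠ 0 := fun hc => hl (by rw [hc, mul_zero])
      exact (DLS_support σ D1 D2 l j h2).trans (ih i l h1)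

lemma isNMDS_of_nzero (M : Matrix (Fin 0) (Fin 0) F) : IsNMDS M := by
  have hempty : ∀ (A : Matrix (Fin 0) (Fin 0) F),
      {k | ∃ x : Fin 0 → F, x ≠ 0 ∧ k = wt x + wt (A.mulVec x)} = ∅ := by
    intro A
    ext k
    simp only [Set.mem_setOf_eq, Set.mem_empty_iff_false, iff_false]
    rintro ⟨x, hx, -⟩
    exact hx (funext fun i => i.elim0)
  constructor
  · unfold branchD; rw [hempty]; simp
  · unfold branchL; rw [hempty]; simp

lemma not_isNMDS_of_not_cycle (σ : Equiv.Perm (Fin n)) (hσ : ∀ i, σ i ≠ i)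
    (D1 D2 : Fin n → F) (k : ℕ) {j0 j1 : Fin n} (hne : ¬ σ.SameCycle j0 j1) :
    ¬ IsNMDS (DLS σ D1 D2 ^ k) := by
  rintro ⟨hD, -⟩
  set N := DLS σ D1 D2 ^ k
  -- branchD N ≤ n - 1
  have hx : (Pi.single j0 1 : Fin n → F) ≠ 0 := by
    intro hc
    have := congrFun hc j0
    simp at this
  have hwt1 : wt (Pi.single j0 1 : Fin n → F) = 1 := by
    unfold wt
    have : (Finset.univ.filter fun i => (Pi.single j0 1 : Fin n → F) i ≠ 0) = {j0} := by
      ext i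
      by_cases hij : i = j0 <;> simp [hij, Pi.single_apply]
    rw [this, Finset.card_singleton]
  have hmem : (wt (Pi.single j0 1 : Fin n → F) + wt (N.mulVec (Pi.single j0 1))) ∈
      {m | ∃ x : Fin n → F, x ≠ 0 ∧ m = wt x + wt (N.mulVec x)} := ⟨_, hx, rfl⟩
  have hle : branchD N ≤ 1 + wt (N.mulVec (Pi.single j0 1)) := by
    have := Nat.sInf_le hmem
    rwa [hwt1] at this
  -- wt (N e_{j0}) ≤ n - 2
  have hsub : (Finset.univ.filter fun i => (N.mulVec (Pi.single j0 1)) i ≠ 0) ⊆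
      Finset.univ \ {j1, σ j1} := by
    intro i hi
    rw [Finset.mem_filter] at hi
    have hi' : N i j0 ≠ 0 := by
      have := hi.2
      rw [Matrix.mulVec_single] at this
      simpa using this
    have hcyc : σ.SameCycle j0 i := DLS_pow_support σ D1 D2 k i j0 hi'
    rw [Finset.mem_sdiff]
    refine ⟨Finset.mem_univ i, ?_⟩
    intro hmem2
    rw [Finset.mem_insert, Finset.mem_singleton] at hmem2
    rcases hmem2 with rfl | rfl
    · exact hne hcyc
    · exact hne (hcyc.trans ⟨-1, by simp⟩)
  have hcard : wt (N.mulVec (Pi.single j0 1)) ≤ n - 2 := by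
    unfold wt
    calc _ ≤ (Finset.univ \ ({j1, σ j1} : Finset (Fin n))).card := Finset.card_le_card hsub
    _ = n - 2 := by
        rw [Finset.card_sdiff_of_subset (by simp)]
        congr 1
        · simp
        · rw [Finset.card_insert_of_notMem (by simp [Ne.symm (hσ j1)]), Finset.card_singleton]
  have hn2 : 2 ≤ n := by
    by_contra hc
    push_neg at hc
    interval_cases n
    · exact j0.elim0
    · exact hne (by rw [Subsingleton.elim j0 j1])
  have : branchD N ≤ n - 1 := by omega
  omega

end helpers3

section helpers4
variable {F : Type*} [Field F] [DecidableEq F] {n : ℕ}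

lemma exists_scaling (σ : Equiv.Perm (Fin n)) (hσ : ∀ i, σ i ≠ i)
    (hall : ∀ i j : Fin n, σ.SameCycle i j) (c : Fin n → F) (hc : ∀ i, c i ≠ 0)
    (hprod : ∏ i, c i = 1) (hn : 0 < n) :
    ∃ e : Fin n → F, (∀ i, e i ≠ 0) ∧ ∀ j, e (σ j) = c j * e j := by
  set z : Fin n := ⟨0, hn⟩ with hz
  have hcyc : σ.IsCycle := ⟨z, hσ z, fun y _ => hall z y⟩
  have hsupp : σ.support = Finset.univ :=
    Finset.eq_univ_iff_forall.2 fun i => Equiv.Perm.mem_support.2 (hσ i)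
  have horder : orderOf σ = n := by
    rw [hcyc.orderOf, hsupp, Finset.card_univ, Fintype.card_fin]
  have hpow_n : σ ^ n = 1 := by
    have := pow_orderOf_eq_one σ
    rwa [horder] at this
  have huniq0 : ∀ s t : ℕ, s ≤ t → t < n → (σ ^ s) z = (σ ^ t) z → s = t := by
    intro s t hst htn heq
    have hdecomp : σ ^ t = σ ^ (t - s) * σ ^ s := by
      rw [← pow_add]; congr 1; omega
    have hfix : (σ ^ (t - s)) ((σ ^ s) z) = (σ ^ s) z := by
      conv_rhs => rw [heq, hdecomp]
      rfl
    have hone : σ ^ (t - s) = 1 :=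
      hcyc.pow_eq_one_iff.2 ⟨(σ ^ s) z, hσ _, hfix⟩
    have hdvd : n ∣ (t - s) := horder ▸ orderOf_dvd_of_pow_eq_one hone
    have : t - s = 0 := Nat.eq_zero_of_dvd_of_lt hdvd (by omega)
    omega
  have huniq : ∀ s t : ℕ, s < n → t < n → (σ ^ s) z = (σ ^ t) z → s = t := by
    intro s t hs ht heq
    rcases le_total s t with h | h
    · exact huniq0 s t h ht heq
    · exact (huniq0 t s h hs heq.symm).symm
  have hex : ∀ j : Fin n, ∃ t : ℕ, t < n ∧ (σ ^ t) z = j := by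
    intro j
    obtain ⟨i, hi⟩ := hcyc.exists_pow_eq (hσ z) (hσ j)
    refine ⟨i % n, Nat.mod_lt _ hn, ?_⟩
    rw [← hi]
    have hmo := pow_mod_orderOf (n := i) σ
    rw [horder] at hmo
    rw [hmo]
  choose m hmlt hmeq using hex
  refine ⟨fun j => ∏ t ∈ Finset.range (m j), c ((σ ^ t) z), ?_, ?_⟩
  · intro j
    exact Finset.prod_ne_zero_iff.2 fun t _ => hc _
  · intro j
    show (∏ t ∈ Finset.range (m (σ j)), c ((σ ^ t) z))
        = c j * ∏ t ∈ Finset.range (m j), c ((σ ^ t) z)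
    have hsj : (σ ^ (m j + 1)) z = σ j := by
      rw [pow_succ', Equiv.Perm.mul_apply, hmeq j]
    by_cases hcase : m j + 1 < n
    · have hmsj : m (σ j) = m j + 1 :=
        huniq _ _ (hmlt (σ j)) hcase (by rw [hmeq (σ j), ← hsj])
      rw [hmsj, Finset.prod_range_succ, hmeq j, mul_comm]
    · have hmn : m j + 1 = n := by have := hmlt j; omega
      have hσjz : σ j = z := by
        rw [← hsj, hmn, hpow_n]; rfl
      have hmsj : m (σ j) = 0 :=
        huniq _ _ (hmlt (σ j)) hn (by rw [hmeq (σ j), hσjz]; rfl)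
      rw [hmsj]
      -- goal: ∏ t in range 0, ... = c j * ∏ t in range (m j), ...
      have hreindex : ∏ t ∈ Finset.range n, c ((σ ^ t) z) = ∏ i : Fin n, c i := by
        rw [← Fin.prod_univ_eq_prod_range (fun t => c ((σ ^ t) z)) n]
        have hg : Function.Bijective (fun t : Fin n => (σ ^ (t : ℕ)) z) := by
          rw [Fintype.bijective_iff_injective_and_card]
          refine ⟨fun s t hst => ?_, rfl⟩
          exact Fin.ext (huniq _ _ s.isLt t.isLt hst)
        exact hg.prod_comp c
      have : c j * ∏ t ∈ Finset.range (m j), c ((σ ^ t) z) = 1 := by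
        have h1 : c j * ∏ t ∈ Finset.range (m j), c ((σ ^ t) z)
            = ∏ t ∈ Finset.range (m j + 1), c ((σ ^ t) z) := by
          rw [Finset.prod_range_succ, hmeq j, mul_comm]
        rw [h1, hmn, hreindex, hprod]
      rw [Finset.prod_range_zero, this]

end helpers4

set_option linter.unusedSectionVars false in
lemma DLS_comm_diag {F : Type*} [Field F] [DecidableEq F] {n : ℕ}
    (σ : Equiv.Perm (Fin n)) (hσ : ∀ i, σ i ≠ i) (a a' D2 e : Fin n → F)
    (key : ∀ j, a j * e j = e (σ j) * a' j) :
    DLS σ a D2 * Matrix.diagonal e = Matrix.diagonal e * DLS σ a' D2 := by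
  ext i j
  rw [mul_diagonal, diagonal_mul, DLS_apply, DLS_apply]
  by_cases h1 : i = σ j
  · subst h1
    simpa [hσ j] using key j
  · by_cases h2 : i = j
    · subst h2
      have hne2 : ¬ (i = σ i) := fun h => hσ i h.symm
      simp [hne2, mul_comm]
    · simp [h1, h2]

/-- If the diagonals D1 = diag(a₁,…,aₙ) and D1' = diag(a₁',…,aₙ') consist of nonzero
elements with equal products, then for k ∈ {n−1, n}, DLS(ρ; D1, D2) is k-NMDS iff
DLS(ρ; D1', D2) is k-NMDS. -/
theorem stmt_12 {F : Type*} [Field F] [Fintype F] [DecidableEq F] [CharP F 2]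
    {n : ℕ} (a a' : Fin n → F) (ha : ∀ i, a i ≠ 0) (ha' : ∀ i, a' i ≠ 0)
    (hprod : ∏ i, a i = ∏ i, a' i)
    (D2 : Fin n → F) (σ : Equiv.Perm (Fin n)) (hσ : ∀ i, σ i ≠ i)
    (k : ℕ) (hk : k = n - 1 ∨ k = n) :
    IsNMDS (DLS σ a D2 ^ k) ↔ IsNMDS (DLS σ a' D2 ^ k) := by
  rcases Nat.eq_zero_or_pos n with h0 | hn
  · subst h0
    exact iff_of_true (isNMDS_of_nzero _) (isNMDS_of_nzero _)
  by_cases hall : ∀ i j : Fin n, σ.SameCycle i j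
  · set c : Fin n → F := fun i => a i * (a' i)⁻¹ with hc
    have hcne : ∀ i, c i ≠ 0 := fun i => mul_ne_zero (ha i) (inv_ne_zero (ha' i))
    have hcprod : ∏ i, c i = 1 := by
      rw [hc]
      rw [Finset.prod_mul_distrib, Finset.prod_inv_distrib, hprod]
      exact mul_inv_cancel₀ (Finset.prod_ne_zero_iff.2 fun i _ => ha' i)
    obtain ⟨e, he, hrec⟩ := exists_scaling σ hσ hall c hcne hcprod hn
    have key : ∀ j, a j * e j = e (σ j) * a' j := by
      intro j
      rw [hrec j, hc]
      have := ha' j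
      field_simp
    have hM := DLS_comm_diag σ hσ a a' D2 e key
    exact isNMDS_iff_of_comm _ _ e he (pow_comm_diag _ _ e hM k)
  · push_neg at hall
    obtain ⟨j0, j1, hne⟩ := hall
    exact iff_of_false (not_isNMDS_of_not_cycle σ hσ a D2 k hne)
      (not_isNMDS_of_not_cycle σ hσ a' D2 k hne)
end

section
/- Let n > 4 and let M be a Toeplitz matrix of order n over a finite field F_{2^r} that is involutory (M^2 = I). Then M is not an NMDS matrix. -/
open Matrix

section Aux

variable {F : Type*} [Field F] [DecidableEq F] {n : ℕ}

/-- Diagonal entries function of a Toeplitz matrix, indexed by `j - i`. -/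
def tE (M : Matrix (Fin n) (Fin n) F) (z : ℤ) : F :=
  if h : z.natAbs < n then
    (if 0 ≤ z then M ⟨0, Nat.lt_of_le_of_lt (Nat.zero_le _) h⟩ ⟨z.natAbs, h⟩
     else M ⟨z.natAbs, h⟩ ⟨0, Nat.lt_of_le_of_lt (Nat.zero_le _) h⟩) else 0

lemma tE_spec (M : Matrix (Fin n) (Fin n) F)
    (htoep : ∀ (i j : Fin n) (hi : (i : ℕ) + 1 < n) (hj : (j : ℕ) + 1 < n),
      M ⟨(i : ℕ) + 1, hi⟩ ⟨(j : ℕ) + 1, hj⟩ = M i j) :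
    ∀ i j : Fin n, M i j = tE M (((j : ℕ) : ℤ) - ((i : ℕ) : ℤ)) := by
  suffices H : ∀ (m : ℕ) (i j : Fin n), (i : ℕ) = m →
      M i j = tE M (((j : ℕ) : ℤ) - ((i : ℕ) : ℤ)) from fun i j => H i i j rfl
  intro m
  induction m with
  | zero =>
    intro i j h0
    have hz : (((j : ℕ) : ℤ) - ((i : ℕ) : ℤ)) = ((j : ℕ) : ℤ) := by rw [h0]; simp
    rw [hz, tE]
    have hj : ((j : ℕ) : ℤ).natAbs < n := by simpa using j.isLt
    rw [dif_pos hj, if_pos (by positivity)]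
    have h1 : (⟨((j : ℕ) : ℤ).natAbs, hj⟩ : Fin n) = j := by ext; simp
    rw [h1]
    congr 1
    ext
    simp [h0]
  | succ m ih =>
    intro i j h0
    obtain ⟨iv, hiv⟩ := i
    obtain ⟨jv', hjv'⟩ := j
    simp only [Fin.val_mk] at h0 ⊢
    subst h0
    rcases Nat.eq_zero_or_pos jv' with hj0 | hjpos
    · subst hj0
      have hz : (((0 : ℕ) : ℤ) - ((m + 1 : ℕ) : ℤ)) = -(((m + 1 : ℕ) : ℤ)) := by simp
      rw [hz, tE]
      have h1 : (-((m + 1 : ℕ) : ℤ)).natAbs < n := by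
        have : (-((m + 1 : ℕ) : ℤ)).natAbs = m + 1 := by omega
        omega
      rw [dif_pos h1, if_neg (by omega)]
      congr 1 <;> ext <;> simp
    · obtain ⟨jv, rfl⟩ : ∃ jv, jv' = jv + 1 := ⟨jv' - 1, by omega⟩
      have pm : m < n := by omega
      have pj : jv < n := by omega
      have h3 := htoep ⟨m, pm⟩ ⟨jv, pj⟩ (by simpa using hiv) (by simpa using hjv')
      calc M ⟨m + 1, hiv⟩ ⟨jv + 1, hjv'⟩ = M ⟨m, pm⟩ ⟨jv, pj⟩ := h3
        _ = tE M (((jv : ℤ)) - ((m : ℤ))) := by simpa using ih ⟨m, pm⟩ ⟨jv, pj⟩ rfl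
        _ = tE M (((jv + 1 : ℕ) : ℤ) - ((m + 1 : ℕ) : ℤ)) := by congr 1; push_cast; ring

lemma conv (M : Matrix (Fin n) (Fin n) F)
    (htoep : ∀ (i j : Fin n) (hi : (i : ℕ) + 1 < n) (hj : (j : ℕ) + 1 < n),
      M ⟨(i : ℕ) + 1, hi⟩ ⟨(j : ℕ) + 1, hj⟩ = M i j)
    (hinv : M * M = 1) (i j : Fin n) :
    ∑ k ∈ Finset.range n, tE M ((k : ℤ) - ((i : ℕ) : ℤ)) * tE M (((j : ℕ) : ℤ) - (k : ℤ))
      = if i = j then 1 else 0 := by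
  have h1 : (M * M) i j = (1 : Matrix (Fin n) (Fin n) F) i j := by rw [hinv]
  rw [Matrix.mul_apply, Matrix.one_apply] at h1
  rw [← h1]
  rw [← Fin.sum_univ_eq_sum_range
    (fun k : ℕ => tE M ((k : ℤ) - ((i : ℕ) : ℤ)) * tE M (((j : ℕ) : ℤ) - (k : ℤ))) n]
  refine Finset.sum_congr rfl fun k _ => ?_
  rw [← tE_spec M htoep i k, ← tE_spec M htoep k j]

lemma bdry (M : Matrix (Fin n) (Fin n) F)
    (htoep : ∀ (i j : Fin n) (hi : (i : ℕ) + 1 < n) (hj : (j : ℕ) + 1 < n),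
      M ⟨(i : ℕ) + 1, hi⟩ ⟨(j : ℕ) + 1, hj⟩ = M i j)
    (hinv : M * M = 1) (a u : ℕ) (ha1 : 1 ≤ a) (ha2 : a < n) (hu1 : 1 ≤ u) (hu2 : u < n) :
    tE M (-(a : ℤ)) * tE M (u : ℤ) = tE M ((n : ℤ) - a) * tE M ((u : ℤ) - n) := by
  set h : ℤ → F := fun z => tE M (z - ((a : ℤ) - 1)) * tE M (((u : ℤ) - 1) - z) with hh
  have e1 := conv M htoep hinv ⟨a, ha2⟩ ⟨u, hu2⟩
  have e2 := conv M htoep hinv ⟨a - 1, by omega⟩ ⟨u - 1, by omega⟩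
  have hL1 : ∑ k ∈ Finset.range n, tE M ((k : ℤ) - ((a : ℕ) : ℤ)) * tE M (((u : ℕ) : ℤ) - (k : ℤ))
      = ∑ k ∈ Finset.range n, h ((k : ℤ) - 1) := by
    refine Finset.sum_congr rfl fun k _ => ?_
    rw [hh]
    simp only []
    rw [show ((k : ℤ) - 1) - ((a : ℤ) - 1) = (k : ℤ) - a by ring,
       show ((u : ℤ) - 1) - ((k : ℤ) - 1) = (u : ℤ) - k by ring]
  have hL2 : ∑ k ∈ Finset.range n, tE M ((k : ℤ) - ((a - 1 : ℕ) : ℤ)) * tE M (((u - 1 : ℕ) : ℤ) - (k : ℤ))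
      = ∑ k ∈ Finset.range n, h (k : ℤ) := by
    refine Finset.sum_congr rfl fun k _ => ?_
    rw [hh]
    simp only []
    rw [show ((k : ℤ)) - ((a : ℤ) - 1) = (k : ℤ) - ((a - 1 : ℕ) : ℤ) by omega,
       show ((u : ℤ) - 1) - (k : ℤ) = ((u - 1 : ℕ) : ℤ) - k by omega]
  rw [hL1] at e1
  rw [hL2] at e2
  obtain ⟨p, rfl⟩ : ∃ p, n = p + 1 := ⟨n - 1, by omega⟩
  rw [Finset.sum_range_succ'] at e1
  rw [Finset.sum_range_succ] at e2
  have hcast : ∀ k ∈ Finset.range p, h (((k + 1 : ℕ) : ℤ) - 1) = h (k : ℤ) := by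
    intro k _
    congr 1
    push_cast
    ring
  rw [Finset.sum_congr rfl hcast] at e1
  have hrhs : (if (⟨a, ha2⟩ : Fin (p + 1)) = ⟨u, hu2⟩ then (1 : F) else 0)
      = if (⟨a - 1, by omega⟩ : Fin (p + 1)) = ⟨u - 1, by omega⟩ then 1 else 0 := by
    by_cases hau : a = u
    · rw [if_pos (by simp [Fin.ext_iff, hau]), if_pos (by simp [Fin.ext_iff, hau])]
    · rw [if_neg (by simp [Fin.ext_iff]; omega), if_neg (by simp [Fin.ext_iff]; omega)]
  have key : h (((0 : ℕ) : ℤ) - 1) = h ((p : ℕ) : ℤ) := by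
    have := e1.trans (hrhs.trans e2.symm)
    exact add_left_cancel this
  have hA : h (((0 : ℕ) : ℤ) - 1) = tE M (-(a : ℤ)) * tE M (u : ℤ) := by
    rw [hh]
    simp only []
    rw [show ((0 : ℕ) : ℤ) - 1 - ((a : ℤ) - 1) = -(a : ℤ) by push_cast; ring,
        show (u : ℤ) - 1 - (((0 : ℕ) : ℤ) - 1) = (u : ℤ) by push_cast; ring]
  have hB : h ((p : ℕ) : ℤ) = tE M (((p + 1 : ℕ) : ℤ) - a) * tE M ((u : ℤ) - ((p + 1 : ℕ) : ℤ)) := by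
    rw [hh]
    simp only []
    rw [show (p : ℤ) - ((a : ℤ) - 1) = ((p + 1 : ℕ) : ℤ) - a by push_cast; ring,
        show (u : ℤ) - 1 - (p : ℤ) = (u : ℤ) - ((p + 1 : ℕ) : ℤ) by push_cast; ring]
  rw [← hA, ← hB]
  exact key

lemma pair_cancel [CharP F 2] (s : Finset ℕ) (g : ℕ → ℕ) (f : ℕ → F)
    (hmem : ∀ a ∈ s, g a ∈ s) (hgg : ∀ a ∈ s, g (g a) = a) (hf : ∀ a ∈ s, f (g a) = f a) :
    ∑ a ∈ s, f a = ∑ a ∈ s.filter (fun a => g a = a), f a := by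
  classical
  have hsplit := Finset.sum_filter_add_sum_filter_not s (fun a => g a = a) f
  have hzero : ∑ a ∈ s.filter (fun a => ¬ g a = a), f a = 0 := by
    refine Finset.sum_involution (fun a _ => g a) ?_ ?_ ?_ ?_
    · intro a ha
      rw [hf a (Finset.mem_filter.mp ha).1]
      exact CharTwo.add_self_eq_zero _
    · intro a ha _
      exact (Finset.mem_filter.mp ha).2
    · intro a ha
      have has := Finset.mem_filter.mp ha
      refine Finset.mem_filter.mpr ⟨hmem a has.1, ?_⟩
      intro hga
      have h2 := hgg a has.1
      rw [hga] at h2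
      exact has.2 h2
    · intro a ha
      exact hgg a (Finset.mem_filter.mp ha).1
  rw [← hsplit, hzero, add_zero]

lemma wt_le_one (x : Fin n → F) (a : Fin n) (h : ∀ i, i ≠ a → x i = 0) : wt x ≤ 1 := by
  have hsub : (Finset.univ.filter fun i => x i ≠ 0) ⊆ {a} := by
    intro i hi
    rw [Finset.mem_filter] at hi
    rw [Finset.mem_singleton]
    by_contra hc
    exact hi.2 (h i hc)
  calc wt x ≤ ({a} : Finset (Fin n)).card := Finset.card_le_card hsub
    _ = 1 := Finset.card_singleton a

lemma wt_le_two (x : Fin n → F) (a b : Fin n) (h : ∀ i, i ≠ a → i ≠ b → x i = 0) : wt x ≤ 2 := by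
  have hsub : (Finset.univ.filter fun i => x i ≠ 0) ⊆ {a, b} := by
    intro i hi
    rw [Finset.mem_filter] at hi
    rw [Finset.mem_insert, Finset.mem_singleton]
    by_contra hc
    push_neg at hc
    exact hi.2 (h i hc.1 hc.2)
  calc wt x ≤ ({a, b} : Finset (Fin n)).card := Finset.card_le_card hsub
    _ ≤ ({b} : Finset (Fin n)).card + 1 := Finset.card_insert_le a {b}
    _ ≤ 2 := by rw [Finset.card_singleton]

lemma sq_inj [CharP F 2] : Function.Injective (fun x : F => x * x) := by
  intro x y hxy
  simp only [] at hxy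
  have h2 : (x + y) * (x + y) = 0 := by
    calc (x + y) * (x + y) = x * x + y * y + (x * y + x * y) := by ring
      _ = x * x + y * y := by rw [CharTwo.add_self_eq_zero, add_zero]
      _ = y * y + y * y := by rw [hxy]
      _ = 0 := CharTwo.add_self_eq_zero _
  have h3 := mul_self_eq_zero.mp h2
  have h4 : x = -y := eq_neg_of_add_eq_zero_left h3
  rwa [CharTwo.neg_eq] at h4

lemma sq_surj [Fintype F] [CharP F 2] (c : F) : ∃ d : F, d * d = c :=
  Finite.injective_iff_surjective.mp sq_inj c

lemma char2_eq_of_add_eq_zero [CharP F 2] {a b : F} (h : a + b = 0) : a = b := by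
  have h2 := eq_neg_of_add_eq_zero_left h
  rwa [CharTwo.neg_eq] at h2

lemma partA [CharP F 2] (M : Matrix (Fin n) (Fin n) F) (j : ℕ) :
    ∑ k ∈ Finset.range (j + 1), tE M (k : ℤ) * tE M ((j : ℤ) - k)
    = ∑ k ∈ (Finset.range (j + 1)).filter (fun k => j - k = k),
        tE M (k : ℤ) * tE M ((j : ℤ) - k) := by
  apply pair_cancel _ (fun k => j - k)
  · intro k hk
    rw [Finset.mem_range] at *
    omega
  · intro k hk
    rw [Finset.mem_range] at hk
    omega
  · intro k hk
    rw [Finset.mem_range] at hk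
    rw [show ((j - k : ℕ) : ℤ) = (j : ℤ) - (k : ℤ) by omega,
        show (j : ℤ) - ((j : ℤ) - (k : ℤ)) = (k : ℤ) by ring]
    ring

lemma partB [CharP F 2] (M : Matrix (Fin n) (Fin n) F) (γ : F) (j : ℕ) :
    ∑ k ∈ Finset.Ico (j + 1) n, tE M (k : ℤ) * (γ * tE M (((j + n - k : ℕ)) : ℤ))
    = ∑ k ∈ (Finset.Ico (j + 1) n).filter (fun k => j + n - k = k),
        tE M (k : ℤ) * (γ * tE M (((j + n - k : ℕ)) : ℤ)) := by
  apply pair_cancel _ (fun k => j + n - k)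
  · intro k hk
    rw [Finset.mem_Ico] at *
    omega
  · intro k hk
    rw [Finset.mem_Ico] at hk
    omega
  · intro k hk
    rw [Finset.mem_Ico] at hk
    rw [show j + n - (j + n - k) = k by omega]
    ring

end Aux

/-- Over a finite field of characteristic 2, an involutory Toeplitz matrix of
order n > 4 is not NMDS. -/
theorem stmt_15 {F : Type*} [Field F] [Fintype F] [DecidableEq F] [CharP F 2]
    {n : ℕ} (hn : 4 < n) (M : Matrix (Fin n) (Fin n) F)
    (htoep : ∀ (i j : Fin n) (hi : (i : ℕ) + 1 < n) (hj : (j : ℕ) + 1 < n),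
      M ⟨(i : ℕ) + 1, hi⟩ ⟨(j : ℕ) + 1, hj⟩ = M i j)
    (hinv : M * M = 1) :
    ¬ IsNMDS M := by
  rintro ⟨hD, -⟩
  have hn0 : 0 < n := by omega
  have lower : ∀ x : Fin n → F, x ≠ 0 → n ≤ wt x + wt (M.mulVec x) := by
    intro x hx
    have h2 : branchD M ≤ wt x + wt (M.mulVec x) := Nat.sInf_le ⟨x, hx, rfl⟩
    rwa [hD] at h2
  -- not all positive-index diagonals are zero
  have col_pos : ¬ (∀ u : ℕ, 1 ≤ u → u < n → tE M (u : ℤ) = 0) := by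
    intro hall
    set a : Fin n := ⟨n - 1, by omega⟩ with ha
    set x : Fin n → F := Pi.single a 1 with hx
    have hxne : x ≠ 0 := by
      intro h0
      have h1 := congrFun h0 a
      rw [hx, Pi.single_eq_same, Pi.zero_apply] at h1
      exact one_ne_zero h1
    have hw1 : wt x ≤ 1 := wt_le_one x a fun i hi => by
      rw [hx]; exact Pi.single_eq_of_ne hi 1
    have hw2 : wt (M.mulVec x) ≤ 1 := by
      refine wt_le_one _ a fun i hi => ?_
      rw [hx, Matrix.mulVec_single]
      show M i a * 1 = 0
      have hiv : (i : ℕ) < n - 1 := by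
        have h4 := i.isLt
        have h5 : (i : ℕ) ≠ n - 1 := fun hc => hi (by ext; simp [ha, hc])
        omega
      have hM : M i a = tE M (((a : ℕ) : ℤ) - ((i : ℕ) : ℤ)) := tE_spec M htoep i a
      have hval : (((a : ℕ) : ℤ) - ((i : ℕ) : ℤ)) = (((n - 1 - (i : ℕ) : ℕ)) : ℤ) := by
        have : (a : ℕ) = n - 1 := rfl
        omega
      rw [hM, hval, hall _ (by omega) (by omega), zero_mul]
    have h6 := lower x hxne
    omega
  -- not all negative-index diagonals are zero
  have col_neg : ¬ (∀ a : ℕ, 1 ≤ a → a < n → tE M (-(a : ℤ)) = 0) := by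
    intro hall
    set a : Fin n := ⟨0, hn0⟩ with ha
    set x : Fin n → F := Pi.single a 1 with hx
    have hxne : x ≠ 0 := by
      intro h0
      have h1 := congrFun h0 a
      rw [hx, Pi.single_eq_same, Pi.zero_apply] at h1
      exact one_ne_zero h1
    have hw1 : wt x ≤ 1 := wt_le_one x a fun i hi => by
      rw [hx]; exact Pi.single_eq_of_ne hi 1
    have hw2 : wt (M.mulVec x) ≤ 1 := by
      refine wt_le_one _ a fun i hi => ?_
      rw [hx, Matrix.mulVec_single]
      show M i a * 1 = 0
      have hiv : 1 ≤ (i : ℕ) := by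
        have h5 : (i : ℕ) ≠ 0 := fun hc => hi (by ext; simp [ha, hc])
        omega
      have hM : M i a = tE M (((a : ℕ) : ℤ) - ((i : ℕ) : ℤ)) := tE_spec M htoep i a
      have hval : (((a : ℕ) : ℤ) - ((i : ℕ) : ℤ)) = -(((i : ℕ) : ℕ) : ℤ) := by
        have : (a : ℕ) = 0 := rfl
        omega
      rw [hM, hval, hall _ (by omega) (by omega), zero_mul]
    have h6 := lower x hxne
    omega
  obtain ⟨a₀, ha₀1, ha₀2, ha₀⟩ : ∃ a : ℕ, 1 ≤ a ∧ a < n ∧ tE M (-(a : ℤ)) ≠ 0 := by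
    by_contra hc
    push_neg at hc
    exact col_neg fun a h1 h2 => hc a h1 h2
  have hna₀ : tE M ((n : ℤ) - a₀) ≠ 0 := by
    intro h0
    apply col_pos
    intro u h1 h2
    have hb := bdry M htoep hinv a₀ u ha₀1 ha₀2 h1 h2
    rw [h0, zero_mul] at hb
    exact (mul_eq_zero.mp hb).resolve_left ha₀
  set γ : F := tE M (-(a₀ : ℤ)) / tE M ((n : ℤ) - a₀) with hγdef
  have hγ : γ ≠ 0 := div_ne_zero ha₀ hna₀
  have F1 : ∀ u : ℕ, 1 ≤ u → u < n → tE M ((u : ℤ) - n) = γ * tE M (u : ℤ) := by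
    intro u h1 h2
    have hb := bdry M htoep hinv a₀ u ha₀1 ha₀2 h1 h2
    rw [hγdef, div_mul_eq_mul_div, eq_div_iff hna₀]
    linear_combination -hb
  have conv2 : ∀ j : ℕ, 1 ≤ j → j < n →
      (∑ k ∈ Finset.range (j + 1), tE M (k : ℤ) * tE M ((j : ℤ) - k))
      + (∑ k ∈ Finset.Ico (j + 1) n, tE M (k : ℤ) * (γ * tE M (((j + n - k : ℕ)) : ℤ))) = 0 := by
    intro j h1 h2
    have hc := conv M htoep hinv ⟨0, hn0⟩ ⟨j, h2⟩
    rw [if_neg (by simp [Fin.ext_iff]; omega)] at hc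
    simp only [Fin.val_mk, Nat.cast_zero, sub_zero] at hc
    rw [Finset.range_eq_Ico,
      ← Finset.sum_Ico_consecutive _ (Nat.zero_le (j + 1)) (by omega : j + 1 ≤ n)] at hc
    rw [← hc, Finset.range_eq_Ico]
    congr 1
    refine Finset.sum_congr rfl fun k hk => ?_
    rw [Finset.mem_Ico] at hk
    have e2 : tE M ((j : ℤ) - k) = γ * tE M (((j + n - k : ℕ)) : ℤ) := by
      have hcast : (j : ℤ) - k = (((j + n - k : ℕ)) : ℤ) - n := by omega
      rw [hcast]
      exact F1 (j + n - k) (by omega) (by omega)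
    rw [e2]
  rcases Nat.even_or_odd n with ⟨m, hm⟩ | hodd
  · -- even case
    have hm3 : 3 ≤ m := by omega
    obtain ⟨d, hd⟩ := sq_surj γ
    have hdne : d ≠ 0 := by
      intro h
      rw [h, mul_zero] at hd
      exact hγ hd.symm
    have hs : ∀ σ : ℕ, 1 ≤ σ → σ < m → tE M (σ : ℤ) = d * tE M ((σ + m : ℕ) : ℤ) := by
      intro σ h1 h2
      have hc := conv2 (2 * σ) (by omega) (by omega)
      rw [partA, partB] at hc
      have hfA : (Finset.range (2 * σ + 1)).filter (fun k => 2 * σ - k = k) = {σ} := by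
        apply Finset.ext
        intro k
        simp only [Finset.mem_filter, Finset.mem_range, Finset.mem_singleton]
        omega
      have hfB : (Finset.Ico (2 * σ + 1) n).filter (fun k => 2 * σ + n - k = k) = {σ + m} := by
        apply Finset.ext
        intro k
        simp only [Finset.mem_filter, Finset.mem_Ico, Finset.mem_singleton]
        omega
      rw [hfA, hfB, Finset.sum_singleton, Finset.sum_singleton] at hc
      rw [show ((2 * σ : ℕ) : ℤ) - (σ : ℤ) = (σ : ℤ) by push_cast; ring,
          show (2 * σ + n - (σ + m) : ℕ) = σ + m by omega] at hc
      have hab : tE M (σ : ℤ) * tE M (σ : ℤ)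
          = (d * tE M ((σ + m : ℕ) : ℤ)) * (d * tE M ((σ + m : ℕ) : ℤ)) := by
        have h3 := char2_eq_of_add_eq_zero hc
        rw [h3, ← hd]
        ring
      exact sq_inj hab
    have hmlt : m < n := by omega
    set am : Fin n := ⟨m, hmlt⟩ with ham
    set a0 : Fin n := ⟨0, hn0⟩ with ha0
    have hne0m : a0 ≠ am := by simp [ha0, ham, Fin.ext_iff]; omega
    set x : Fin n → F := Pi.single a0 1 + Pi.single am d with hx
    have hxne : x ≠ 0 := by
      intro h0
      have h1 := congrFun h0 a0
      rw [hx, Pi.add_apply, Pi.single_eq_same, Pi.single_eq_of_ne hne0m,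
        Pi.zero_apply, add_zero] at h1
      exact one_ne_zero h1
    have hwx : wt x ≤ 2 := wt_le_two x a0 am fun i h1 h2 => by
      rw [hx, Pi.add_apply, Pi.single_eq_of_ne h1, Pi.single_eq_of_ne h2, add_zero]
    have hmv : M.mulVec x = fun i => M i a0 * 1 + M i am * d := by
      rw [hx, Matrix.mulVec_add, Matrix.mulVec_single, Matrix.mulVec_single]
      rfl
    have hwMx : wt (M.mulVec x) ≤ 2 := by
      refine wt_le_two _ a0 am fun i h1 h2 => ?_
      rw [hmv]
      show M i a0 * 1 + M i am * d = 0
      have hi1 : 1 ≤ (i : ℕ) := by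
        have h5 : (i : ℕ) ≠ 0 := fun hc => h1 (by ext; simp [ha0, hc])
        omega
      have hi2 : (i : ℕ) ≠ m := fun hc => h2 (by ext; simp [ham, hc])
      have hilt : (i : ℕ) < n := i.isLt
      have hMa0 : M i a0 = γ * tE M (((n - (i : ℕ) : ℕ)) : ℤ) := by
        rw [tE_spec M htoep i a0]
        rw [show (((a0 : ℕ) : ℤ) - ((i : ℕ) : ℤ)) = (((n - (i : ℕ) : ℕ)) : ℤ) - n by
          have : (a0 : ℕ) = 0 := rfl
          omega]
        exact F1 (n - (i : ℕ)) (by omega) (by omega)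
      have hMam : M i am = tE M (((am : ℕ) : ℤ) - ((i : ℕ) : ℤ)) := tE_spec M htoep i am
      have hamv : (am : ℕ) = m := rfl
      rcases Nat.lt_or_ge (i : ℕ) m with hlt | hge
      · have h3 : tE M (((am : ℕ) : ℤ) - ((i : ℕ) : ℤ)) = tE M (((m - (i : ℕ) : ℕ)) : ℤ) := by
          congr 1
          omega
        have h4 := hs (m - (i : ℕ)) (by omega) (by omega)
        rw [show ((m - (i : ℕ) + m : ℕ)) = (n - (i : ℕ) : ℕ) by omega] at h4
        rw [hMa0, hMam, h3, h4, ← hd]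
        have h6 := CharTwo.add_self_eq_zero (d * d * tE M (((n - (i : ℕ) : ℕ)) : ℤ))
        linear_combination h6
      · have hgt : m < (i : ℕ) := by omega
        have h3 : tE M (((am : ℕ) : ℤ) - ((i : ℕ) : ℤ))
            = γ * tE M (((n + m - (i : ℕ) : ℕ)) : ℤ) := by
          rw [show (((am : ℕ) : ℤ) - ((i : ℕ) : ℤ)) = (((n + m - (i : ℕ) : ℕ)) : ℤ) - n by omega]
          exact F1 (n + m - (i : ℕ)) (by omega) (by omega)
        have h4 := hs (n - (i : ℕ)) (by omega) (by omega)
        rw [show ((n - (i : ℕ) + m : ℕ)) = (n + m - (i : ℕ) : ℕ) by omega] at h4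
        rw [hMa0, hMam, h3, h4]
        have h6 := CharTwo.add_self_eq_zero (γ * d * tE M (((n + m - (i : ℕ) : ℕ)) : ℤ))
        linear_combination h6
    have h7 := lower x hxne
    omega
  · -- odd case
    apply col_pos
    intro u h1 h2
    obtain ⟨m', hm'⟩ := hodd
    by_cases hk : 2 * u < n
    · have hc := conv2 (2 * u) (by omega) (by omega)
      rw [partA, partB] at hc
      have hfA : (Finset.range (2 * u + 1)).filter (fun k => 2 * u - k = k) = {u} := by
        apply Finset.ext
        intro k
        simp only [Finset.mem_filter, Finset.mem_range, Finset.mem_singleton]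
        omega
      have hfB : (Finset.Ico (2 * u + 1) n).filter (fun k => 2 * u + n - k = k) = ∅ := by
        apply Finset.ext
        intro k
        simp only [Finset.mem_filter, Finset.mem_Ico, Finset.notMem_empty, iff_false]
        omega
      rw [hfA, hfB, Finset.sum_singleton, Finset.sum_empty, add_zero] at hc
      rw [show ((2 * u : ℕ) : ℤ) - (u : ℤ) = (u : ℤ) by push_cast; ring] at hc
      exact mul_self_eq_zero.mp hc
    · have hc := conv2 (2 * u - n) (by omega) (by omega)
      rw [partA, partB] at hc
      have hfA : (Finset.range (2 * u - n + 1)).filter (fun k => 2 * u - n - k = k) = ∅ := by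
        apply Finset.ext
        intro k
        simp only [Finset.mem_filter, Finset.mem_range, Finset.notMem_empty, iff_false]
        omega
      have hfB : (Finset.Ico (2 * u - n + 1) n).filter (fun k => 2 * u - n + n - k = k) = {u} := by
        apply Finset.ext
        intro k
        simp only [Finset.mem_filter, Finset.mem_Ico, Finset.mem_singleton]
        omega
      rw [hfA, hfB, Finset.sum_empty, Finset.sum_singleton, zero_add] at hc
      rw [show (2 * u - n + n - u : ℕ) = u by omega] at hc
      rcases mul_eq_zero.mp hc with h3 | h3
      · exact h3
      · rcases mul_eq_zero.mp h3 with h4 | h4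
        · exact absurd h4 hγ
        · exact h4
end

section
/- For every r ≥ 1, the 4×4 circulant matrix Circ(0,1,1,1) over F_{2^r} (with entries the field elements 0 and 1) is both involutory (its square is the identity) and NMDS. -/
open Matrix

/-- The circulant matrix with first row `x`, each subsequent row being the right
cyclic shift of the previous row. -/
def circ {F : Type*} {n : ℕ} (x : Fin n → F) : Matrix (Fin n) (Fin n) F :=
  Matrix.of fun i j => x (j - i)


lemma fneg1 : (-1 : Fin 4) = 3 := by decide
lemma fneg2 : (-2 : Fin 4) = 2 := by decide
lemma fneg3 : (-3 : Fin 4) = 1 := by decide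

section
variable {F : Type*} [Field F] [DecidableEq F] [CharP F 2]

set_option linter.unusedSectionVars false

lemma aux_mulVec (x : Fin 4 → F) (k : Fin 4) :
    (circ (![0,1,1,1] : Fin 4 → F)).mulVec x k = (∑ j, x j) + x k := by
  have h2 : (2 : F) = 0 := by exact_mod_cast CharP.cast_eq_zero F 2
  fin_cases k <;>
      simp [circ, Matrix.mulVec, dotProduct, Fin.sum_univ_four, fneg1, fneg2, fneg3]
  · linear_combination -(x 0) * h2
  · linear_combination -(x 1) * h2
  · linear_combination -(x 2) * h2
  · linear_combination -(x 3) * h2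

lemma aux_lb (x : Fin 4 → F) (hx : x ≠ 0) :
    4 ≤ wt x + wt ((circ (![0,1,1,1] : Fin 4 → F)).mulVec x) := by
  set s : F := ∑ j, x j with hs_def
  have hy : (circ (![0,1,1,1] : Fin 4 → F)).mulVec x = fun k => s + x k :=
    funext fun k => aux_mulVec x k
  by_cases hs : s = 0
  · have hxy : (circ (![0,1,1,1] : Fin 4 → F)).mulVec x = x := by
      rw [hy]; funext k; rw [hs, zero_add]
    rw [hxy]
    obtain ⟨i, hi⟩ : ∃ i, x i ≠ 0 := by
      by_contra h; push_neg at h; exact hx (funext fun i => h i)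
    have hj : ∃ j, j ≠ i ∧ x j ≠ 0 := by
      by_contra h
      push_neg at h
      have : s = x i := by
        rw [hs_def]
        exact Finset.sum_eq_single_of_mem i (Finset.mem_univ i)
          (fun j _ hji => by by_contra hc; exact hc (h j hji))
      exact hi (this ▸ hs)
    obtain ⟨j, hji, hj⟩ := hj
    have hsub : ({i, j} : Finset (Fin 4)) ⊆ Finset.univ.filter fun k => x k ≠ 0 := by
      intro k hk
      simp only [Finset.mem_insert, Finset.mem_singleton] at hk
      rcases hk with rfl | rfl <;> simp [hi, hj]
    have h2le : 2 ≤ wt x := by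
      have := Finset.card_le_card hsub
      rwa [Finset.card_pair (Ne.symm hji)] at this
    omega
  · have hcov : (Finset.univ : Finset (Fin 4)) ⊆
        (Finset.univ.filter fun k => x k ≠ 0) ∪
        (Finset.univ.filter fun k => (circ (![0,1,1,1] : Fin 4 → F)).mulVec x k ≠ 0) := by
      intro k _
      rw [Finset.mem_union, Finset.mem_filter, Finset.mem_filter]
      by_cases hxk : x k = 0
      · right
        refine ⟨Finset.mem_univ k, ?_⟩
        rw [hy]
        simpa [hxk] using hs
      · left; exact ⟨Finset.mem_univ k, hxk⟩
    have := (Finset.card_le_card hcov).trans (Finset.card_union_le _ _)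
    simpa [wt] using this

lemma aux_wit :
    (4 : ℕ) = wt (![1,0,0,0] : Fin 4 → F) +
      wt ((circ (![0,1,1,1] : Fin 4 → F)).mulVec ![1,0,0,0]) := by
  have h1 : (Finset.univ.filter fun i => (![1,0,0,0] : Fin 4 → F) i ≠ 0) = {0} := by
    ext i; fin_cases i <;> simp
  have hmv : (circ (![0,1,1,1] : Fin 4 → F)).mulVec ![1,0,0,0] = ![0,1,1,1] := by
    funext k
    rw [aux_mulVec]
    have h2 : (2 : F) = 0 := by exact_mod_cast CharP.cast_eq_zero F 2
    fin_cases k <;> simp [Fin.sum_univ_four]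
    linear_combination h2
  have h2 : (Finset.univ.filter fun i =>
      (circ (![0,1,1,1] : Fin 4 → F)).mulVec ![1,0,0,0] i ≠ 0) = {1, 2, 3} := by
    rw [hmv]; ext i; fin_cases i <;> simp
  simp [wt, h1, h2]

lemma aux_transpose : (circ (![0,1,1,1] : Fin 4 → F))ᵀ = circ (![0,1,1,1] : Fin 4 → F) := by
  ext i j
  fin_cases i <;> fin_cases j <;> simp [circ, Matrix.transpose, fneg1, fneg2, fneg3]

lemma aux_sq : circ (![0,1,1,1] : Fin 4 → F) * circ (![0,1,1,1] : Fin 4 → F) = 1 := by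
  have h2 : (2 : F) = 0 := by exact_mod_cast CharP.cast_eq_zero F 2
  ext i j
  fin_cases i <;> fin_cases j <;>
    simp [circ, Matrix.mul_apply, Fin.sum_univ_four, Matrix.one_apply,
      fneg1, fneg2, fneg3] <;>
    linear_combination h2

lemma aux_ne : (![1,0,0,0] : Fin 4 → F) ≠ 0 := by
  intro h
  simpa using congrFun h 0

lemma aux_branchD : branchD (circ (![0,1,1,1] : Fin 4 → F)) = 4 := by
  have hmem : (4 : ℕ) ∈ {k | ∃ x : Fin 4 → F, x ≠ 0 ∧
      k = wt x + wt ((circ (![0,1,1,1] : Fin 4 → F)).mulVec x)} :=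
    ⟨![1,0,0,0], aux_ne, aux_wit⟩
  refine le_antisymm (Nat.sInf_le hmem) (le_csInf ⟨4, hmem⟩ ?_)
  rintro k ⟨x, hx, rfl⟩
  exact aux_lb x hx

end

/-- Over any finite field of characteristic 2, the circulant matrix
Circ(0,1,1,1) of order 4 is both involutory and NMDS. -/
theorem stmt_17 {F : Type*} [Field F] [Fintype F] [DecidableEq F] [CharP F 2] :
    circ (![0, 1, 1, 1] : Fin 4 → F) * circ (![0, 1, 1, 1] : Fin 4 → F) = 1 ∧
    IsNMDS (circ (![0, 1, 1, 1] : Fin 4 → F)) := by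
  refine ⟨aux_sq, aux_branchD, ?_⟩
  have hL : branchL (circ (![0,1,1,1] : Fin 4 → F)) =
      branchD (circ (![0,1,1,1] : Fin 4 → F)) := by
    unfold branchL branchD
    rw [aux_transpose]
  rw [hL, aux_branchD]
end

section
/- Let M = Circ(x_1,…,x_n) be a circulant matrix of order n over F_{2^r} that is orthogonal (M·Mᵀ = I) and NMDS. Then the left-circulant matrix L = l-Circ(x_1,…,x_n) with the same first row is both involutory (L^2 = I) and NMDS. -/
open Matrix

/-- The left-circulant matrix with first row `x`, each subsequent row being the left
cyclic shift of the previous row. -/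
def lcirc {F : Type*} {n : ℕ} (x : Fin n → F) : Matrix (Fin n) (Fin n) F :=
  Matrix.of fun i j => x (i + j)

lemma wt_comp_equiv {F : Type*} [Zero F] [DecidableEq F] {n : ℕ}
    (v : Fin n → F) (e : Fin n ≃ Fin n) : wt (fun i => v (e i)) = wt v := by
  unfold wt
  apply Finset.card_bij (fun i _ => e i)
  · intro a ha; simpa using (Finset.mem_filter.mp ha).2
  · intro a _ b _ h; exact e.injective h
  · intro b hb
    exact ⟨e.symm b, by simpa using (Finset.mem_filter.mp hb).2, by simp⟩

/-- If the circulant matrix with first row x is orthogonal and NMDS, then the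
left-circulant matrix with the same first row is involutory and NMDS. -/
theorem stmt_18 {F : Type*} [Field F] [Fintype F] [DecidableEq F] [CharP F 2]
    {n : ℕ} (x : Fin n → F) (horth : circ x * (circ x)ᵀ = 1) (hM : IsNMDS (circ x)) :
    lcirc x * lcirc x = 1 ∧ IsNMDS (lcirc x) := by
  rcases Nat.eq_zero_or_pos n with hn | hn
  · subst hn
    have hempty : {k | ∃ v : Fin 0 → F, v ≠ 0 ∧
        k = wt v + wt ((lcirc x).mulVec v)} = ∅ := by
      ext k; simp only [Set.mem_setOf_eq, Set.mem_empty_iff_false, iff_false]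
      rintro ⟨v, hv, -⟩
      exact hv (funext fun i => i.elim0)
    have hempty' : {k | ∃ v : Fin 0 → F, v ≠ 0 ∧
        k = wt v + wt ((lcirc x)ᵀ.mulVec v)} = ∅ := by
      ext k; simp only [Set.mem_setOf_eq, Set.mem_empty_iff_false, iff_false]
      rintro ⟨v, hv, -⟩
      exact hv (funext fun i => i.elim0)
    refine ⟨Subsingleton.elim _ _, ?_, ?_⟩
    · rw [branchD, hempty]; simp
    · rw [branchL, hempty']; simp
  haveI : NeZero n := ⟨hn.ne'⟩
  -- lcirc is symmetric
  have hsym : (lcirc x)ᵀ = lcirc x := by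
    ext i j; simp [lcirc, Matrix.transpose_apply, add_comm]
  -- mulVec relation
  have hmv : ∀ v : Fin n → F, (lcirc x).mulVec v = fun i => (circ x).mulVec v (-i) := by
    intro v; funext i
    simp only [Matrix.mulVec, lcirc, circ, Matrix.of_apply, dotProduct]
    apply Finset.sum_congr rfl
    intro j _
    congr 1
    congr 1
    abel
  have hwt : ∀ v : Fin n → F, wt ((lcirc x).mulVec v) = wt ((circ x).mulVec v) := by
    intro v
    rw [hmv v]
    exact wt_comp_equiv ((circ x).mulVec v) (Equiv.neg (Fin n))
  have hsetD : {k | ∃ v : Fin n → F, v ≠ 0 ∧ k = wt v + wt ((lcirc x).mulVec v)} =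
      {k | ∃ v : Fin n → F, v ≠ 0 ∧ k = wt v + wt ((circ x).mulVec v)} := by
    ext k
    simp only [Set.mem_setOf_eq]
    constructor <;> rintro ⟨v, hv, rfl⟩ <;> exact ⟨v, hv, by rw [hwt v]⟩
  have hbd : branchD (lcirc x) = n := by
    rw [branchD, hsetD, ← branchD, hM.1]
  have hbl : branchL (lcirc x) = n := by
    rw [branchL, hsym, ← branchD, hbd]
  refine ⟨?_, hbd, hbl⟩
  -- involutory
  ext i j
  have h := congrFun (congrFun horth j) i
  simp only [Matrix.mul_apply, Matrix.transpose_apply, circ, Matrix.of_apply] at h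
  simp only [Matrix.mul_apply, lcirc, Matrix.of_apply]
  rw [show ((1 : Matrix (Fin n) (Fin n) F) i j) = (1 : Matrix (Fin n) (Fin n) F) j i by
    simp [Matrix.one_apply, eq_comm], ← h]
  conv_rhs => rw [← Equiv.sum_comp (Equiv.addRight (i + j))]
  apply Finset.sum_congr rfl
  intro k _
  simp only [Equiv.coe_addRight]
  congr 1
  · congr 1; abel
  · congr 1; abel
end

section
/- For every r ≥ 1, the 4×4 matrix B over F_{2^r} with rows (0,0,0,1), (1,1,0,0), (0,1,0,0), (0,0,1,1) (entries being the field elements 0 and 1) satisfies: B^3 is an NMDS matrix; that is, B is 3-NMDS. -/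
open Matrix

/-!
In characteristic 2, `B³ = J - P` where `J` is the all-ones matrix and `P` the permutation matrix
of the transposition `(1 3)`. For `M = J - P_σ` and `s = ∑ i, x i` we have `(M x) i = s - x (σ i)`,
so `M x` vanishes exactly where `x ∘ σ` takes the value `s`. If `s ≠ 0` these coordinates are
nonzero coordinates of `x`, whence `wt x + wt (M x) ≥ n`; if `s = 0` then `wt (M x) = wt x ≥ 2`.
So the branch number is at least `min n 4`, a unit vector attains `n`, and `Mᵀ = J - P_σ⁻¹` has
the same shape.
-/

open Finset

lemma wt_add_card_filter_eq_zero {M : Type*} [Zero M] [DecidableEq M] {n : ℕ} (x : Fin n → M) :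
    wt x + #{i | x i = 0} = n := by
  simpa [wt, add_comm] using card_filter_add_card_filter_not (s := univ) (fun i => x i = 0)

lemma wt_eq_zero_iff {M : Type*} [Zero M] [DecidableEq M] {n : ℕ} {x : Fin n → M} :
    wt x = 0 ↔ x = 0 := by
  simp [wt, funext_iff]

lemma sum_ne_zero_of_wt_eq_one {M : Type*} [AddCommMonoid M] [DecidableEq M] {n : ℕ}
    {x : Fin n → M} (hx : wt x = 1) : ∑ i, x i ≠ 0 := by
  obtain ⟨i, hi⟩ := card_eq_one.mp hx
  rw [← sum_filter_ne_zero, show univ.filter (fun j => x j ≠ 0) = {i} from hi, sum_singleton]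
  simpa using (Finset.ext_iff.mp hi i)

lemma wt_single {M : Type*} [Zero M] [DecidableEq M] {n : ℕ} (i : Fin n) {a : M} (ha : a ≠ 0) :
    wt (Pi.single i a) = 1 := by
  simp [wt, Pi.single_apply, ha, filter_eq']

lemma card_filter_comp_perm {α : Type*} [Fintype α] (p : α → Prop) [DecidablePred p]
    (σ : Equiv.Perm α) : #{i | p (σ i)} = #{i | p i} := by
  simp only [card_filter]
  exact Equiv.sum_comp σ (fun i => if p i then 1 else 0)

section OnesSubPerm

variable {R : Type*} [Ring R] {n : ℕ}

def onesSubPerm (σ : Equiv.Perm (Fin n)) : Matrix (Fin n) (Fin n) R :=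
  Matrix.of fun i j => if σ i = j then 0 else 1

lemma onesSubPerm_transpose (σ : Equiv.Perm (Fin n)) :
    (onesSubPerm σ : Matrix (Fin n) (Fin n) R)ᵀ = onesSubPerm σ⁻¹ := by
  ext i j
  simp only [onesSubPerm, transpose_apply, of_apply, Equiv.Perm.inv_def, Equiv.eq_symm_apply,
    eq_comm]

lemma onesSubPerm_mulVec (σ : Equiv.Perm (Fin n)) (x : Fin n → R) :
    onesSubPerm σ *ᵥ x = fun i => ∑ j, x j - x (σ i) := by
  ext i
  simp only [mulVec, dotProduct, onesSubPerm, of_apply, ite_mul, zero_mul, one_mul, sum_ite,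
    sum_const_zero, zero_add]
  rw [filter_ne, sum_erase_eq_sub (mem_univ _)]

variable [DecidableEq R]

lemma wt_onesSubPerm_mulVec_add_card (σ : Equiv.Perm (Fin n)) (x : Fin n → R) :
    wt (onesSubPerm σ *ᵥ x) + #{j | x j = ∑ i, x i} = n := by
  have hzero : #{i | (onesSubPerm σ *ᵥ x) i = 0} = #{j | x j = ∑ i, x i} := by
    simp only [onesSubPerm_mulVec, sub_eq_zero, eq_comm (a := ∑ j, x j)]
    exact card_filter_comp_perm (fun j => x j = ∑ i, x i) σ
  rw [← hzero]
  exact wt_add_card_filter_eq_zero _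

lemma min_le_wt_add_wt_onesSubPerm_mulVec (σ : Equiv.Perm (Fin n)) {x : Fin n → R}
    (hx : x ≠ 0) : min n 4 ≤ wt x + wt (onesSubPerm σ *ᵥ x) := by
  have hMx := wt_onesSubPerm_mulVec_add_card σ x
  by_cases hs : ∑ i, x i = 0
  · have hx0 : wt x ≠ 0 := wt_eq_zero_iff.not.mpr hx
    have hx1 : wt x ≠ 1 := fun h => sum_ne_zero_of_wt_eq_one h hs
    have := wt_add_card_filter_eq_zero x
    rw [hs] at hMx
    omega
  · have : #{j | x j = ∑ i, x i} ≤ wt x :=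
      card_le_card fun j hj => by
        simp only [mem_filter, mem_univ, true_and] at hj ⊢
        exact hj ▸ hs
    omega

lemma wt_single_add_wt_onesSubPerm_mulVec_single [Nontrivial R] (σ : Equiv.Perm (Fin n))
    (i : Fin n) : wt (Pi.single i (1 : R)) + wt (onesSubPerm σ *ᵥ Pi.single i (1 : R)) = n := by
  have hMx := wt_onesSubPerm_mulVec_add_card σ (Pi.single i 1 : Fin n → R)
  have hcount :
      #{j | (Pi.single i 1 : Fin n → R) j = ∑ k, (Pi.single i 1 : Fin n → R) k} = 1 := by
    simp [Pi.single_apply, filter_eq']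
  rw [wt_single i one_ne_zero]
  omega

end OnesSubPerm

lemma branchL_eq_branchD_transpose {F : Type*} [Field F] [DecidableEq F] {n : ℕ}
    (M : Matrix (Fin n) (Fin n) F) : branchL M = branchD Mᵀ :=
  rfl

lemma branchD_onesSubPerm {F : Type*} [Field F] [DecidableEq F] {n : ℕ} [NeZero n] (hn : n ≤ 4)
    (σ : Equiv.Perm (Fin n)) : branchD (onesSubPerm σ : Matrix (Fin n) (Fin n) F) = n := by
  refine IsLeast.csInf_eq ⟨⟨Pi.single 0 1, by simp, ?_⟩, ?_⟩
  · exact (wt_single_add_wt_onesSubPerm_mulVec_single σ 0).symm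
  · rintro k ⟨x, hx, rfl⟩
    simpa only [min_eq_left hn] using min_le_wt_add_wt_onesSubPerm_mulVec σ hx

lemma isNMDS_onesSubPerm {F : Type*} [Field F] [DecidableEq F] {n : ℕ} [NeZero n] (hn : n ≤ 4)
    (σ : Equiv.Perm (Fin n)) : IsNMDS (onesSubPerm σ : Matrix (Fin n) (Fin n) F) := by
  refine ⟨branchD_onesSubPerm hn σ, ?_⟩
  rw [branchL_eq_branchD_transpose, onesSubPerm_transpose]
  exact branchD_onesSubPerm hn σ⁻¹

lemma cube_eq_onesSubPerm {R : Type*} [Ring R] [CharP R 2] :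
    (!![0, 0, 0, 1; 1, 1, 0, 0; 0, 1, 0, 0; 0, 0, 1, 1] : Matrix (Fin 4) (Fin 4) R) ^ 3
      = onesSubPerm (Equiv.swap 1 3) := by
  ext i j
  fin_cases i <;> fin_cases j <;>
    simp [pow_succ, mul_apply, Fin.sum_univ_four, onesSubPerm, Equiv.swap_apply_def,
      CharTwo.add_self_eq_zero]

theorem stmt_19_general {F : Type*} [Field F] [DecidableEq F] [CharP F 2] :
    IsNMDS ((!![0, 0, 0, 1; 1, 1, 0, 0; 0, 1, 0, 0; 0, 0, 1, 1] :
      Matrix (Fin 4) (Fin 4) F) ^ 3) := by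
  rw [cube_eq_onesSubPerm]
  exact isNMDS_onesSubPerm le_rfl _

/-- Over any finite field of characteristic 2, the given 4×4 matrix B is 3-NMDS,
i.e. B³ is NMDS. -/
theorem stmt_19 {F : Type*} [Field F] [Fintype F] [DecidableEq F] [CharP F 2] :
    IsNMDS ((!![0, 0, 0, 1; 1, 1, 0, 0; 0, 1, 0, 0; 0, 0, 1, 1] :
      Matrix (Fin 4) (Fin 4) F) ^ 3) :=
  stmt_19_general
end
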